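/- arXiv:2010.00208 — 2 statements merged into one kernel-verified Lean document; each statement's English description precedes it below -/
import Mathlib

section
/- Let G be an abelian group and (f_n)_{n∈ℕ} a generalized moment sequence (f₀(0)=1 and f_n(x+y) = Σ_{k=0}^{n} C(n,k) f_k(x) f_{n-k}(y) for all n, x, y). Then there exist an exponential m : G → ℂ and additive functions a₁, a₂, ... : G → ℂ such that f_n(x) = B_n(a₁(x),...,a_n(x)) m(x) for every n and every x ∈ G. -/
/-!
Let `F x = ∑ fₙ(x) zⁿ/n!`. The moment equation says exactly `F (x + y) = F x * F y`, so `m = f₀`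
is an exponential and the logarithmic derivative `L x = (F x)' / F x` is additive in `x`. The
exponential generating function `B t` of the Bell polynomials satisfies `(B t)' = T' * B t`, where
`T = ∑ tₙ zⁿ/n!`. Taking for `a (j + 1) x` the coefficients of `L x`, both `F x` and `m x • B (a · x)`
solve `Φ' = L x * Φ` with the same constant term, and such solutions are unique.
-/

/-- The `n`-th complete (exponential) Bell polynomial, as a function of the
sequence of variables `t 1, t 2, ...` (the value `t 0` is unused). -/
noncomputable def bell : ℕ → (ℕ → ℂ) → ℂ
  | 0, _ => 1
  | n + 1, t => ∑ i ∈ Finset.range (n + 1),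
      (n.choose i : ℂ) * bell (n - i) t * t (i + 1)
decreasing_by omega

open Finset
open scoped Nat

namespace PowerSeries

section CommRing

variable {R : Type*} [CommRing R] [IsAddTorsionFree R]

theorem eq_of_derivative_eq_mul {L F G : R⟦X⟧} (hF : d⁄dX R F = L * F)
    (hG : d⁄dX R G = L * G) (h0 : constantCoeff F = constantCoeff G) : F = G := by
  ext n
  induction n using Nat.strong_induction_on with
  | _ n ih =>
    cases n with
    | zero => simpa using h0
    | succ n =>
      have key : coeff (n + 1) F * (n + 1) = coeff (n + 1) G * (n + 1) := by
        rw [← coeff_derivative, ← coeff_derivative, hF, hG, coeff_mul, coeff_mul]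
        refine sum_congr rfl fun p hp => ?_
        rw [ih p.2 (by linarith [mem_antidiagonal.mp hp])]
      rw [← Nat.cast_succ, mul_comm, ← nsmul_eq_mul, mul_comm, ← nsmul_eq_mul] at key
      exact (smul_right_inj n.succ_ne_zero).mp key

end CommRing

section Field

variable {K : Type*} [Field K]

noncomputable def logDeriv (F : K⟦X⟧) : K⟦X⟧ := d⁄dX K F * F⁻¹

theorem logDeriv_mul {F G : K⟦X⟧} (hF : constantCoeff F ≠ 0) (hG : constantCoeff G ≠ 0) :
    logDeriv (F * G) = logDeriv F + logDeriv G := by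
  have hFF := PowerSeries.mul_inv_cancel F hF
  have hGG := PowerSeries.mul_inv_cancel G hG
  simp only [logDeriv, Derivation.leibniz, smul_eq_mul, PowerSeries.mul_inv_rev]
  linear_combination (d⁄dX K G * G⁻¹) * hFF + (d⁄dX K F * F⁻¹) * hGG

theorem derivative_eq_logDeriv_mul {F : K⟦X⟧} (hF : constantCoeff F ≠ 0) :
    d⁄dX K F = logDeriv F * F := by
  rw [logDeriv, mul_assoc, PowerSeries.inv_mul_cancel F hF, mul_one]

noncomputable def egf (a : ℕ → K) : K⟦X⟧ := mk fun n => a n / n !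

theorem coeff_egf (a : ℕ → K) (n : ℕ) : coeff n (egf a) = a n / n ! := coeff_mk _ _

theorem constantCoeff_egf (a : ℕ → K) : constantCoeff (egf a) = a 0 := by
  simp [← coeff_zero_eq_constantCoeff_apply, coeff_egf]

theorem smul_egf (c : K) (a : ℕ → K) : c • egf a = egf (c • a) := by
  ext n; simp [coeff_egf, mul_div_assoc]

variable [CharZero K]

theorem egf_injective : Function.Injective (egf : (ℕ → K) → K⟦X⟧) := fun a b h => by
  funext n
  simpa [coeff_egf, n.factorial_ne_zero] using congr_arg (coeff n) h

theorem egf_factorial_mul_coeff (F : K⟦X⟧) : egf (fun n => n ! * coeff n F) = F := by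
  ext n; simp [coeff_egf, n.factorial_ne_zero]

theorem derivative_egf (a : ℕ → K) : d⁄dX K (egf a) = egf fun n => a (n + 1) := by
  ext n
  rw [coeff_derivative, coeff_egf, coeff_egf, Nat.factorial_succ]
  push_cast
  field_simp

theorem egf_mul (a b : ℕ → K) :
    egf a * egf b = egf fun n => ∑ k ∈ range (n + 1), (n.choose k : K) * a k * b (n - k) := by
  ext n
  rw [coeff_mul, Nat.sum_antidiagonal_eq_sum_range_succ_mk, coeff_egf, sum_div]
  refine sum_congr rfl fun k hk => ?_
  have hkn : k ≤ n := mem_range_succ_iff.mp hk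
  have hchoose : (n.choose k : K) ≠ 0 := Nat.cast_ne_zero.mpr (Nat.choose_pos hkn).ne'
  rw [coeff_egf, coeff_egf, ← Nat.choose_mul_factorial_mul_factorial hkn]
  push_cast
  field_simp

end Field

end PowerSeries

open PowerSeries

theorem derivative_egf_bell (t : ℕ → ℂ) :
    d⁄dX ℂ (egf fun n => bell n t) = egf (fun n => t (n + 1)) * egf fun n => bell n t := by
  rw [derivative_egf, egf_mul]
  congr 1
  funext n
  rw [bell]
  exact sum_congr rfl fun i _ => by ring

theorem stmt_15 {G : Type*} [AddCommGroup G]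
    (f : ℕ → G → ℂ) (h0 : f 0 0 = 1)
    (hf : ∀ (n : ℕ) (x y : G),
      f n (x + y) = ∑ k ∈ Finset.range (n + 1),
        (n.choose k : ℂ) * f k x * f (n - k) y) :
    ∃ (m : G → ℂ) (a : ℕ → G → ℂ),
      (∀ x y : G, m (x + y) = m x * m y) ∧ (∀ x : G, m x ≠ 0) ∧
      (∀ j, ∀ x y : G, a j (x + y) = a j x + a j y) ∧
      ∀ (n : ℕ) (x : G), f n x = bell n (fun j => a j x) * m x := by
  have hm : ∀ x y, f 0 (x + y) = f 0 x * f 0 y := by simpa using hf 0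
  have hm0 : ∀ x, f 0 x ≠ 0 := fun x =>
    left_ne_zero_of_mul_eq_one (by rw [← hm, add_neg_cancel, h0])
  set F : G → ℂ⟦X⟧ := fun x => egf (f · x)
  have hF0 : ∀ x, constantCoeff (F x) ≠ 0 := by simpa [F, constantCoeff_egf] using hm0
  have hF : ∀ x y, F (x + y) = F x * F y := by simp [F, egf_mul, hf]
  have hL : ∀ x y, logDeriv (F (x + y)) = logDeriv (F x) + logDeriv (F y) := fun x y => by
    rw [hF, logDeriv_mul (hF0 x) (hF0 y)]
  -- `a 0` is a junk value, which `bell` never reads.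
  let a : ℕ → G → ℂ := fun j x => (j - 1)! * coeff (j - 1) (logDeriv (F x))
  refine ⟨f 0, a, hm, hm0, fun j x y => by simp [a, hL, mul_add], fun n x => ?_⟩
  have ha : egf (fun j => a (j + 1) x) = logDeriv (F x) := by
    simpa [a] using egf_factorial_mul_coeff (logDeriv (F x))
  have hB : F x = f 0 x • egf (bell · (a · x)) := by
    refine eq_of_derivative_eq_mul (derivative_eq_logDeriv_mul (hF0 x)) ?_ ?_
    · rw [Derivation.map_smul, derivative_egf_bell, ha, mul_smul_comm]
    · simp [F, constantCoeff_egf, bell]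
  rw [smul_egf] at hB
  simpa [mul_comm] using congr_fun (egf_injective hB) n
end

section
/- Let G be an abelian group, r ≥ 1, and (f_α)_{α ∈ ℕ^r} a generalized moment sequence of rank r with f_0 = m an exponential. Then there exists a family of additive functions a = (a_μ) : G → ℂ (μ nonzero multi-indices in ℕ^r) such that f_α(x) = B_α(a(x)) m(x) for every α ∈ ℕ^r and every x ∈ G, where B_α denotes the multivariate Bell polynomial. -/
/-- The multivariate (complete exponential) Bell polynomial `B_α`, defined so that
`exp (∑_{μ ≠ 0} x_μ t^μ / μ!) = ∑_α B_α(x) t^α / α!`; explicitly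
`B_α(x) = ∑_n (α! / n!) ∑_{μ₁+⋯+μ_n = α, μ_i ≠ 0} ∏_i x_{μ_i} / μ_i!`. -/
noncomputable def mvBell {r : ℕ} (α : Fin r → ℕ) (x : (Fin r → ℕ) → ℂ) : ℂ :=
  ∑ n ∈ Finset.range ((∑ i, α i) + 1),
    ((∏ i, Nat.factorial (α i) : ℕ) : ℂ) / ((Nat.factorial n : ℕ) : ℂ) *
      ∑ μ ∈ (Fintype.piFinset fun _ : Fin n => Finset.Iic α).filter
          (fun μ => (∑ j, μ j) = α ∧ ∀ j, μ j ≠ 0),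
        ∏ j, x (μ j) / ((∏ i, Nat.factorial (μ j i) : ℕ) : ℂ)

/-
Dividing by the exponential `m = f₀` reduces to the case `f₀ = 1`. The Bell polynomials are the
coefficients of `exp (∑_{μ ≠ 0} x_μ t^μ / μ!)`, so `exp (A + B) = exp A * exp B` for power series
without constant term (the nilpotent exponential in a quotient by a power of the augmentation
ideal) gives the binomial formula for `B_α`. Since `B_α(x) - x_α` only involves the `x_μ` with
`μ < α`, the system `B_α(a) = g_α` has a solution, unique on `μ ≠ 0`, found by recursion; by the
binomial formula `a(x) + a(y)` solves the system for `g(x + y)`, whence additivity.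
-/

open Finset
open scoped Nat

namespace MvPowerSeries

variable {σ R : Type*}

theorem coeff_eq_zero_of_mem_ker_constantCoeff_pow [CommSemiring R] {K : ℕ} {f : MvPowerSeries σ R}
    (hf : f ∈ RingHom.ker (constantCoeff (σ := σ) (R := R)) ^ K) {s : σ →₀ ℕ}
    (hs : s.degree < K) : coeff s f = 0 := by
  classical
  induction K generalizing f s with
  | zero => omega
  | succ K ih =>
    rw [pow_succ] at hf
    refine Submodule.mul_induction_on hf (fun a ha b hb => ?_) fun a b ha hb => ?_
    · rw [coeff_mul]
      refine sum_eq_zero fun p hp => ?_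
      rw [HasAntidiagonal.mem_antidiagonal] at hp
      by_cases hp2 : p.2 = 0
      · rw [hp2, coeff_zero_eq_constantCoeff_apply, RingHom.mem_ker.mp hb, mul_zero]
      · have hp1 : p.1.degree < K := by
          have hp2 : p.2.degree ≠ 0 := (Finsupp.degree_eq_zero_iff _).not.mpr hp2
          have hdeg := congrArg Finsupp.degree hp
          rw [map_add] at hdeg
          omega
        rw [ih ha hp1, zero_mul]
    · rw [map_add, ha, hb, add_zero]

variable [CommRing R] [Algebra ℚ R]

noncomputable def partialExp (K : ℕ) (A : MvPowerSeries σ R) : MvPowerSeries σ R :=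
  ∑ n ∈ range K, (n ! : ℚ)⁻¹ • A ^ n

theorem coeff_partialExp_add {A B : MvPowerSeries σ R} (hA : constantCoeff A = 0)
    (hB : constantCoeff B = 0) {K : ℕ} {s : σ →₀ ℕ} (hs : s.degree < K) :
    coeff s (partialExp K (A + B)) = coeff s (partialExp K A * partialExp K B) := by
  -- modulo the `K`-th power of the augmentation ideal, `A` and `B` become nilpotent
  set I := RingHom.ker (constantCoeff (σ := σ) (R := R)) ^ K
  have hnil (C : MvPowerSeries σ R) (hC : constantCoeff C = 0) : Ideal.Quotient.mk I C ^ K = 0 := by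
    rw [← map_pow, Ideal.Quotient.eq_zero_iff_mem]
    exact Ideal.pow_mem_pow (RingHom.mem_ker.mpr hC) K
  have hexp (C : MvPowerSeries σ R) (hC : constantCoeff C = 0) :
      Ideal.Quotient.mk I (partialExp K C) = IsNilpotent.exp (Ideal.Quotient.mk I C) := by
    simp only [partialExp, map_sum, map_rat_smul, map_pow, IsNilpotent.exp_eq_sum (hnil C hC)]
  have hAB : constantCoeff (A + B) = 0 := by rw [map_add, hA, hB, add_zero]
  have hmem : partialExp K (A + B) - partialExp K A * partialExp K B ∈ I := by
    rw [← Ideal.Quotient.eq, map_mul, hexp _ hA, hexp _ hB, hexp _ hAB, map_add,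
      IsNilpotent.exp_add_of_commute (Commute.all _ _) ⟨K, hnil A hA⟩ ⟨K, hnil B hB⟩]
  rw [← sub_eq_zero, ← map_sub]
  exact coeff_eq_zero_of_mem_ker_constantCoeff_pow hmem hs

-- The exponential of a series without constant term: the terms `Aⁿ / n!` with `n > deg s`
-- do not contribute at `s`. For other `A` the value is meaningless.
noncomputable def exp (A : MvPowerSeries σ R) : MvPowerSeries σ R :=
  fun s => coeff s (partialExp (s.degree + 1) A)

theorem coeff_exp (A : MvPowerSeries σ R) (s : σ →₀ ℕ) :
    coeff s (exp A) = coeff s (partialExp (s.degree + 1) A) := rfl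

theorem coeff_partialExp_eq_coeff_exp {A : MvPowerSeries σ R} (hA : constantCoeff A = 0)
    {K : ℕ} {s : σ →₀ ℕ} (hs : s.degree < K) :
    coeff s (partialExp K A) = coeff s (exp A) := by
  rw [coeff_exp, partialExp, partialExp, map_sum, map_sum]
  refine (sum_subset (range_subset_range.mpr hs) fun n _ hn => ?_).symm
  have hpow : A ^ n ∈ RingHom.ker (constantCoeff (σ := σ) (R := R)) ^ n :=
    Ideal.pow_mem_pow (RingHom.mem_ker.mpr hA) n
  rw [map_rat_smul, coeff_eq_zero_of_mem_ker_constantCoeff_pow hpow (by simpa using hn),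
    smul_zero]

theorem exp_add {A B : MvPowerSeries σ R} (hA : constantCoeff A = 0)
    (hB : constantCoeff B = 0) : exp (A + B) = exp A * exp B := by
  classical
  ext s
  rw [← coeff_partialExp_eq_coeff_exp (by rw [map_add, hA, hB, add_zero]) (lt_add_one _),
    coeff_partialExp_add hA hB (lt_add_one _), coeff_mul, coeff_mul]
  refine sum_congr rfl fun p hp => ?_
  have hdeg := congrArg Finsupp.degree (HasAntidiagonal.mem_antidiagonal.mp hp)
  rw [map_add] at hdeg
  rw [coeff_partialExp_eq_coeff_exp hA (by omega), coeff_partialExp_eq_coeff_exp hB (by omega)]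

end MvPowerSeries

namespace Finsupp

theorem sum_antidiagonal_eq_sum_Iic_coe {σ M : Type*} [Fintype σ] [DecidableEq σ]
    [AddCommMonoid M] (s : σ →₀ ℕ) (F : (σ → ℕ) → (σ → ℕ) → M) :
    ∑ p ∈ antidiagonal s, F p.1 p.2 = ∑ β ∈ Iic ⇑s, F β (⇑s - β) := by
  have hcoe (β : σ → ℕ) : ⇑(equivFunOnFinite.symm β) = β :=
    coe_equivFunOnFinite_symm β
  have hsnd {p : (σ →₀ ℕ) × (σ →₀ ℕ)} (hp : p ∈ antidiagonal s) : ⇑p.2 = ⇑s - ⇑p.1 := by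
    rw [← HasAntidiagonal.mem_antidiagonal.mp hp, coe_add, add_tsub_cancel_left]
  refine sum_nbij' (fun p => ⇑p.1)
    (fun β => (equivFunOnFinite.symm β, s - equivFunOnFinite.symm β))
    (fun p hp => ?_) (fun β hβ => ?_) (fun p hp => ?_) (fun β _ => hcoe β)
    (fun p hp => by rw [hsnd hp])
  · rw [mem_Iic, ← HasAntidiagonal.mem_antidiagonal.mp hp, coe_add]
    exact le_self_add
  · rw [mem_Iic] at hβ
    rw [HasAntidiagonal.mem_antidiagonal]
    exact add_tsub_cancel_of_le (coe_le_coe.mp ((hcoe β).symm ▸ hβ))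
  · exact Prod.ext (equivFunOnFinite_symm_coe p.1) (DFunLike.coe_injective (by
      rw [coe_tsub, hcoe, hsnd hp]))

end Finsupp

section Bell

variable {r : ℕ}

noncomputable def multiFactorial (α : Fin r → ℕ) : ℂ := ((∏ i, Nat.factorial (α i) : ℕ) : ℂ)

theorem multiFactorial_ne_zero (α : Fin r → ℕ) : multiFactorial α ≠ 0 :=
  Nat.cast_ne_zero.mpr (prod_ne_zero_iff.mpr fun i _ => Nat.factorial_ne_zero (α i))

theorem multiFactorial_eq_mul {α β : Fin r → ℕ} (hβ : β ≤ α) :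
    multiFactorial α = (∏ i, ((α i).choose (β i) : ℂ)) * multiFactorial β *
      multiFactorial (α - β) := by
  simp only [multiFactorial, Nat.cast_prod, ← prod_mul_distrib]
  refine prod_congr rfl fun i _ => ?_
  rw [Pi.sub_apply, ← Nat.cast_mul, ← Nat.cast_mul, Nat.choose_mul_factorial_mul_factorial (hβ i)]

def mvCompositions (n : ℕ) (α : Fin r → ℕ) : Finset (Fin n → Fin r → ℕ) :=
  (Fintype.piFinset fun _ : Fin n => Iic α).filter fun μ => (∑ j, μ j) = α ∧ ∀ j, μ j ≠ 0

theorem mem_mvCompositions {n : ℕ} {α : Fin r → ℕ} {μ : Fin n → Fin r → ℕ} :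
    μ ∈ mvCompositions n α ↔ (∑ j, μ j) = α ∧ ∀ j, μ j ≠ 0 := by
  rw [mvCompositions, mem_filter, Fintype.mem_piFinset, and_iff_right_iff_imp]
  rintro ⟨rfl, -⟩ j
  exact mem_Iic.mpr (single_le_sum (fun _ _ => zero_le) (mem_univ j))

theorem mvCompositions_one {α : Fin r → ℕ} (hα : α ≠ 0) : mvCompositions 1 α = {fun _ => α} := by
  ext μ
  rw [mem_mvCompositions, Fin.sum_univ_one, mem_singleton]
  refine ⟨fun h => funext fun j => ?_, by rintro rfl; exact ⟨rfl, fun _ => hα⟩⟩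
  rw [Fin.fin_one_eq_zero j, h.1]

theorem lt_of_mem_mvCompositions {n : ℕ} {α : Fin r → ℕ} {μ : Fin n → Fin r → ℕ}
    (hμ : μ ∈ mvCompositions n α) (hn : n ≠ 1) (j : Fin n) : μ j < α := by
  rw [mem_mvCompositions] at hμ
  have : Nontrivial (Fin n) := Fin.nontrivial_iff_two_le.mpr (by have := j.pos; omega)
  obtain ⟨k, hk⟩ := exists_ne j
  calc μ j < μ j + μ k := lt_add_of_pos_right _ (pos_iff_ne_zero.mpr (hμ.2 k))
    _ = ∑ i ∈ {j, k}, μ i := (sum_pair hk.symm).symm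
    _ ≤ α := hμ.1 ▸ sum_le_univ_sum_of_nonneg (fun _ => zero_le)

theorem mvBell_eq_sum_mvCompositions (α : Fin r → ℕ) (x : (Fin r → ℕ) → ℂ) :
    mvBell α x = ∑ n ∈ range ((∑ i, α i) + 1), multiFactorial α / (n ! : ℂ) *
      ∑ μ ∈ mvCompositions n α, ∏ j, x (μ j) / multiFactorial (μ j) := rfl

open MvPowerSeries

-- `∑_{μ ≠ 0} x_μ t^μ / μ!`, so that `exp (bellSeries x) = ∑_α B_α(x) t^α / α!`.
noncomputable def bellSeries (x : (Fin r → ℕ) → ℂ) : MvPowerSeries (Fin r) ℂ :=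
  fun s => if s = 0 then 0 else x s / multiFactorial s

theorem coeff_bellSeries (x : (Fin r → ℕ) → ℂ) (s : Fin r →₀ ℕ) :
    coeff s (bellSeries x) = if s = 0 then 0 else x s / multiFactorial s := rfl

theorem constantCoeff_bellSeries (x : (Fin r → ℕ) → ℂ) : constantCoeff (bellSeries x) = 0 := by
  rw [← coeff_zero_eq_constantCoeff_apply, coeff_bellSeries, if_pos rfl]

theorem bellSeries_add (x y : (Fin r → ℕ) → ℂ) :
    bellSeries (x + y) = bellSeries x + bellSeries y := by
  ext s
  rw [map_add, coeff_bellSeries, coeff_bellSeries, coeff_bellSeries]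
  split_ifs
  · rw [add_zero]
  · rw [Pi.add_apply, add_div]

theorem coeff_bellSeries_pow (x : (Fin r → ℕ) → ℂ) (n : ℕ) (s : Fin r →₀ ℕ) :
    coeff s (bellSeries x ^ n) =
      ∑ μ ∈ mvCompositions n s, ∏ j, x (μ j) / multiFactorial (μ j) := by
  have hpow : bellSeries x ^ n = ∏ _j : Fin n, bellSeries x := by
    rw [prod_const, card_univ, Fintype.card_fin]
  rw [hpow, coeff_prod, ← sum_filter_of_ne (s := univ.finsuppAntidiag s)
    (p := fun l => ∀ j, l j ≠ 0) fun l _ hl j hj =>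
      hl (prod_eq_zero (mem_univ j) (by rw [hj, coeff_bellSeries, if_pos rfl]))]
  let e : (Fin n →₀ (Fin r →₀ ℕ)) ≃ (Fin n → Fin r → ℕ) :=
    Finsupp.equivFunOnFinite.trans (Equiv.piCongrRight fun _ => Finsupp.equivFunOnFinite)
  refine sum_equiv e (fun l => ?_) fun l hl => prod_congr rfl fun j _ => ?_
  · simp [e, mem_mvCompositions, Finsupp.ext_iff, funext_iff]
  · rw [mem_filter] at hl
    rw [coeff_bellSeries, if_neg (hl.2 j)]
    rfl

theorem mvBell_coe_eq_coeff_exp (s : Fin r →₀ ℕ) (x : (Fin r → ℕ) → ℂ) :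
    mvBell s x = multiFactorial s * coeff s (exp (bellSeries x)) := by
  rw [mvBell_eq_sum_mvCompositions, coeff_exp, partialExp, map_sum, mul_sum, Finsupp.degree_eq_sum]
  refine sum_congr rfl fun n _ => ?_
  rw [← coeff_bellSeries_pow, map_rat_smul, Rat.smul_def]
  push_cast
  ring

theorem mvBell_add (α : Fin r → ℕ) (u v : (Fin r → ℕ) → ℂ) :
    mvBell α (u + v) =
      ∑ β ∈ Iic α, (∏ i, ((α i).choose (β i) : ℂ)) * mvBell β u * mvBell (α - β) v := by
  set s := Finsupp.equivFunOnFinite.symm α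
  have hs : ⇑s = α := Finsupp.coe_equivFunOnFinite_symm α
  calc mvBell α (u + v)
      = ∑ p ∈ antidiagonal s, multiFactorial α *
          (coeff p.1 (exp (bellSeries u)) * coeff p.2 (exp (bellSeries v))) := by
        rw [← hs, mvBell_coe_eq_coeff_exp, bellSeries_add,
          exp_add (constantCoeff_bellSeries u) (constantCoeff_bellSeries v), coeff_mul, mul_sum]
    _ = ∑ p ∈ antidiagonal s,
          (∏ i, ((α i).choose (p.1 i) : ℂ)) * mvBell p.1 u * mvBell p.2 v := by
        refine sum_congr rfl fun p hp => ?_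
        have hsum : ⇑p.1 + ⇑p.2 = α := by
          rw [← hs, ← Finsupp.coe_add, HasAntidiagonal.mem_antidiagonal.mp hp]
        rw [mvBell_coe_eq_coeff_exp, mvBell_coe_eq_coeff_exp,
          multiFactorial_eq_mul (hsum ▸ le_self_add : ⇑p.1 ≤ α), ← hsum, add_tsub_cancel_left]
        ring
    _ = _ := by rw [Finsupp.sum_antidiagonal_eq_sum_Iic_coe s
          (fun β γ => (∏ i, ((α i).choose (β i) : ℂ)) * mvBell β u * mvBell γ v), hs]

theorem mvBell_zero (x : (Fin r → ℕ) → ℂ) : mvBell 0 x = 1 := by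
  simp [mvBell_eq_sum_mvCompositions, mvCompositions, multiFactorial]

theorem mvBell_sub_apply_congr {α : Fin r → ℕ} (hα : α ≠ 0) {x y : (Fin r → ℕ) → ℂ}
    (h : ∀ μ < α, μ ≠ 0 → x μ = y μ) : mvBell α x - x α = mvBell α y - y α := by
  have h1 : 1 ∈ range ((∑ i, α i) + 1) := by
    have : ∑ i, α i ≠ 0 := fun h0 => hα (funext (sum_eq_zero_iff.mp h0 · (mem_univ _)))
    exact mem_range.mpr (by omega)
  have hsplit (z : (Fin r → ℕ) → ℂ) : mvBell α z = z α +
      ∑ n ∈ (range ((∑ i, α i) + 1)).erase 1, multiFactorial α / (n ! : ℂ) *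
        ∑ μ ∈ mvCompositions n α, ∏ j, z (μ j) / multiFactorial (μ j) := by
    rw [mvBell_eq_sum_mvCompositions, ← add_sum_erase _ _ h1, mvCompositions_one hα, sum_singleton,
      Fin.prod_univ_one, Nat.factorial_one, Nat.cast_one, div_one, mul_div_cancel₀ _
        (multiFactorial_ne_zero α)]
  rw [hsplit x, hsplit y, add_sub_cancel_left, add_sub_cancel_left]
  refine sum_congr rfl fun n hn => congrArg _ (sum_congr rfl fun μ hμ => prod_congr rfl
    fun j _ => ?_)
  rw [h _ (lt_of_mem_mvCompositions hμ (ne_of_mem_erase hn) j) ((mem_mvCompositions.mp hμ).2 j)]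

theorem eq_of_forall_mvBell_eq {x y : (Fin r → ℕ) → ℂ} (h : ∀ α, mvBell α x = mvBell α y)
    {μ : Fin r → ℕ} (hμ : μ ≠ 0) : x μ = y μ := by
  induction μ using WellFoundedLT.induction with
  | _ μ ih =>
    have htop := mvBell_sub_apply_congr hμ fun ν hν hν0 => ih ν hν hν0
    rwa [h μ, sub_right_inj] at htop

-- Solves `mvBell α (bellLog g) = g α` by recursion along `<`: by `mvBell_sub_apply_congr`,
-- `mvBell α x - x α` only involves the values `x μ` with `μ < α`.
open scoped Classical in
noncomputable def bellLog (g : (Fin r → ℕ) → ℂ) : (Fin r → ℕ) → ℂ :=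
  wellFounded_lt.fix fun α rec => g α - mvBell α fun μ => if h : μ < α then rec μ h else 0

open scoped Classical in
theorem bellLog_eq (g : (Fin r → ℕ) → ℂ) (α : Fin r → ℕ) :
    bellLog g α = g α - mvBell α fun μ => if μ < α then bellLog g μ else 0 := by
  rw [bellLog, WellFounded.fix_eq]
  simp only [dite_eq_ite]

open scoped Classical in
theorem mvBell_bellLog {g : (Fin r → ℕ) → ℂ} (hg : g 0 = 1) (α : Fin r → ℕ) :
    mvBell α (bellLog g) = g α := by
  rcases eq_or_ne α 0 with rfl | hα
  · rw [mvBell_zero, hg]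
  · have htop := mvBell_sub_apply_congr hα (x := bellLog g)
      (y := fun μ => if μ < α then bellLog g μ else 0) fun μ hμ _ => (if_pos hμ).symm
    rw [if_neg (lt_irrefl α), sub_zero, bellLog_eq g α] at htop
    linear_combination htop

theorem bellLog_add {G : Type*} [Add G] {g : (Fin r → ℕ) → G → ℂ} (hg0 : ∀ x, g 0 x = 1)
    (hg : ∀ α x y, g α (x + y) =
      ∑ β ∈ Iic α, (∏ i, ((α i).choose (β i) : ℂ)) * g β x * g (α - β) y)
    {μ : Fin r → ℕ} (hμ : μ ≠ 0) (x y : G) :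
    bellLog (g · (x + y)) μ = bellLog (g · x) μ + bellLog (g · y) μ := by
  refine eq_of_forall_mvBell_eq (y := bellLog (g · x) + bellLog (g · y)) (fun α => ?_) hμ
  rw [mvBell_bellLog (g := (g · (x + y))) (hg0 _), mvBell_add, hg]
  simp only [mvBell_bellLog (g := (g · x)) (hg0 x), mvBell_bellLog (g := (g · y)) (hg0 y)]

end Bell

theorem stmt_18_general {G : Type*} [AddCommGroup G] (r : ℕ)
    (f : (Fin r → ℕ) → G → ℂ) (m : G → ℂ)
    (hf : ∀ (α : Fin r → ℕ) (x y : G),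
      f α (x + y) = ∑ β ∈ Finset.Iic α,
        (∏ i, ((α i).choose (β i) : ℂ)) * f β x * f (α - β) y)
    (h0 : f 0 = m) (hm : m ≠ 0) :
    ∃ a : (Fin r → ℕ) → G → ℂ,
      (∀ μ : Fin r → ℕ, μ ≠ 0 → ∀ x y : G, a μ (x + y) = a μ x + a μ y) ∧
      ∀ (α : Fin r → ℕ) (x : G), f α x = mvBell α (fun μ => a μ x) * m x := by
  have hmul (x y : G) : m (x + y) = m x * m y := by
    have h := hf 0 x y
    rw [show Iic (0 : Fin r → ℕ) = {0} from Iic_bot, sum_singleton] at h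
    simpa [h0] using h
  have hm0 (x : G) : m x ≠ 0 := fun hx =>
    hm (funext fun w => by rw [Pi.zero_apply, ← add_sub_cancel x w, hmul, hx, zero_mul])
  set g : (Fin r → ℕ) → G → ℂ := fun α x => f α x / m x
  have hg0 (x : G) : g 0 x = 1 := by simp [g, h0, hm0 x]
  have hg (α : Fin r → ℕ) (x y : G) : g α (x + y) =
      ∑ β ∈ Iic α, (∏ i, ((α i).choose (β i) : ℂ)) * g β x * g (α - β) y := by
    simp only [g, hf, hmul, sum_div]
    refine sum_congr rfl fun β _ => ?_
    field_simp [hm0 x, hm0 y]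
  refine ⟨fun μ x => bellLog (g · x) μ, fun μ hμ x y => bellLog_add hg0 hg hμ x y,
    fun α x => ?_⟩
  rw [mvBell_bellLog (hg0 x)]
  exact (div_mul_cancel₀ _ (hm0 x)).symm

theorem stmt_18 {G : Type*} [AddCommGroup G] (r : ℕ) (hr : 1 ≤ r)
    (f : (Fin r → ℕ) → G → ℂ) (m : G → ℂ)
    (hf : ∀ (α : Fin r → ℕ) (x y : G),
      f α (x + y) = ∑ β ∈ Finset.Iic α,
        (∏ i, ((α i).choose (β i) : ℂ)) * f β x * f (α - β) y)
    (h0 : f 0 = m) (hm : m ≠ 0) :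
    ∃ a : (Fin r → ℕ) → G → ℂ,
      (∀ μ : Fin r → ℕ, μ ≠ 0 → ∀ x y : G, a μ (x + y) = a μ x + a μ y) ∧
      ∀ (α : Fin r → ℕ) (x : G), f α x = mvBell α (fun μ => a μ x) * m x :=
  stmt_18_general r f m hf h0 hm
end
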